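/- arXiv:2403.15146 — 7 statements merged into one kernel-verified Lean document; each statement's English description precedes it below -/
import Mathlib

section
/- Let $\beta_1, \beta_2 \in [0,1)$ with $\beta_1^2 < \beta_2$. Let $(g_t)_{t\ge 1}$ be a sequence of vectors in $\mathbb{R}^d$, and define $m_0 = 0$, $\nu_0 > 0$, $m_t = \beta_1 m_{t-1} + (1-\beta_1) g_t$, $\nu_t = \beta_2 \nu_{t-1} + (1-\beta_2)\|g_t\|^2$. Then for all $t \ge 1$, $\frac{\|m_t\|}{\sqrt{\nu_t}} \le \frac{1-\beta_1}{\sqrt{1-\beta_2}\sqrt{1 - \beta_1^2/\beta_2}}$. -/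
theorem adam_bounded_update {E : Type*} [NormedAddCommGroup E] [InnerProductSpace ℝ E]
    (β1 β2 : ℝ) (hβ1 : 0 ≤ β1) (hβ1' : β1 < 1) (hβ2 : 0 ≤ β2) (hβ2' : β2 < 1)
    (hββ : β1 ^ 2 < β2)
    (g m : ℕ → E) (ν : ℕ → ℝ)
    (hm0 : m 0 = 0) (hν0 : 0 < ν 0)
    (hm : ∀ t : ℕ, 1 ≤ t → m t = β1 • m (t - 1) + (1 - β1) • g t)
    (hν : ∀ t : ℕ, 1 ≤ t → ν t = β2 * ν (t - 1) + (1 - β2) * ‖g t‖ ^ 2) :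
    ∀ t : ℕ, 1 ≤ t →
      ‖m t‖ / Real.sqrt (ν t) ≤
        (1 - β1) / (Real.sqrt (1 - β2) * Real.sqrt (1 - β1 ^ 2 / β2)) := by
  have hβ2pos : 0 < β2 := lt_of_le_of_lt (sq_nonneg β1) hββ
  set c : ℝ := β1 ^ 2 / β2 with hc_def
  have hc0 : 0 ≤ c := div_nonneg (sq_nonneg β1) hβ2pos.le
  have hc1 : c < 1 := (div_lt_one hβ2pos).2 hββ
  have hA : ∀ t : ℕ, ‖m t‖ ≤ (1 - β1) * ∑ i ∈ Finset.range t, β1 ^ i * ‖g (t - i)‖ := by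
    intro t
    induction t with
    | zero => simp [hm0]
    | succ t ih =>
      have hrec := hm (t + 1) (by omega)
      simp only [Nat.add_sub_cancel] at hrec
      rw [hrec]
      have h1 : ‖β1 • m t + (1 - β1) • g (t + 1)‖ ≤ β1 * ‖m t‖ + (1 - β1) * ‖g (t + 1)‖ := by
        calc ‖β1 • m t + (1 - β1) • g (t + 1)‖ ≤ ‖β1 • m t‖ + ‖(1 - β1) • g (t + 1)‖ :=
              norm_add_le _ _
          _ = β1 * ‖m t‖ + (1 - β1) * ‖g (t + 1)‖ := by
              rw [norm_smul, norm_smul, Real.norm_of_nonneg hβ1,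
                Real.norm_of_nonneg (by linarith)]
      have hsum : ∑ i ∈ Finset.range (t + 1), β1 ^ i * ‖g (t + 1 - i)‖
          = ‖g (t + 1)‖ + β1 * ∑ i ∈ Finset.range t, β1 ^ i * ‖g (t - i)‖ := by
        rw [Finset.sum_range_succ']
        simp only [Nat.succ_sub_succ_eq_sub, pow_zero, Nat.sub_zero, one_mul]
        rw [Finset.mul_sum, add_comm]
        congr 1
        refine Finset.sum_congr rfl fun i _ => by ring
      rw [hsum]
      nlinarith [h1, mul_le_mul_of_nonneg_left ih hβ1]
  have hB : ∀ t : ℕ, 0 < ν t ∧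
      (1 - β2) * ∑ i ∈ Finset.range t, β2 ^ i * ‖g (t - i)‖ ^ 2 ≤ ν t := by
    intro t
    induction t with
    | zero => exact ⟨hν0, by simpa using hν0.le⟩
    | succ t ih =>
      have hrec := hν (t + 1) (by omega)
      simp only [Nat.add_sub_cancel] at hrec
      have hg2 : (0:ℝ) ≤ (1 - β2) * ‖g (t + 1)‖ ^ 2 :=
        mul_nonneg (by linarith) (sq_nonneg _)
      constructor
      · rw [hrec]; nlinarith [ih.1]
      · have hsum : ∑ i ∈ Finset.range (t + 1), β2 ^ i * ‖g (t + 1 - i)‖ ^ 2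
            = ‖g (t + 1)‖ ^ 2 + β2 * ∑ i ∈ Finset.range t, β2 ^ i * ‖g (t - i)‖ ^ 2 := by
          rw [Finset.sum_range_succ']
          simp only [Nat.succ_sub_succ_eq_sub, pow_zero, Nat.sub_zero, one_mul]
          rw [Finset.mul_sum, add_comm]
          congr 1
          refine Finset.sum_congr rfl fun i _ => by ring
        rw [hrec, hsum]
        nlinarith [ih.2, mul_le_mul_of_nonneg_left ih.2 hβ2]
  intro t _
  have hνpos := (hB t).1
  have hS2 : ∑ i ∈ Finset.range t, β2 ^ i * ‖g (t - i)‖ ^ 2 ≤ ν t / (1 - β2) := by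
    rw [le_div_iff₀ (by linarith)]
    have := (hB t).2
    linarith [this]
  have hS2nn : (0:ℝ) ≤ ∑ i ∈ Finset.range t, β2 ^ i * ‖g (t - i)‖ ^ 2 :=
    Finset.sum_nonneg fun i _ => mul_nonneg (pow_nonneg hβ2 _) (sq_nonneg _)
  have hS1 : ∑ i ∈ Finset.range t, c ^ i ≤ 1 / (1 - c) := by
    have h := geom_sum_eq hc1.ne t
    rw [h]
    have heq : (c ^ t - 1) / (c - 1) = (1 - c ^ t) / (1 - c) := by
      rw [div_eq_div_iff (by linarith) (by linarith)]; ring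
    rw [heq, div_le_div_iff₀ (by linarith) (by linarith)]
    nlinarith [mul_nonneg (pow_nonneg hc0 t) (by linarith : (0:ℝ) ≤ 1 - c)]
  have hS1nn : (0:ℝ) ≤ ∑ i ∈ Finset.range t, c ^ i :=
    Finset.sum_nonneg fun i _ => pow_nonneg hc0 _
  -- Cauchy–Schwarz
  have hcs : (∑ i ∈ Finset.range t, β1 ^ i * ‖g (t - i)‖) ^ 2
      ≤ (∑ i ∈ Finset.range t, c ^ i) *
        ∑ i ∈ Finset.range t, β2 ^ i * ‖g (t - i)‖ ^ 2 := by
    have hβ1split : ∀ i : ℕ, β1 ^ i * ‖g (t - i)‖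
        = (Real.sqrt c) ^ i * ((Real.sqrt β2) ^ i * ‖g (t - i)‖) := by
      intro i
      have : Real.sqrt c * Real.sqrt β2 = β1 := by
        rw [← Real.sqrt_mul hc0, hc_def, div_mul_cancel₀ _ hβ2pos.ne',
          Real.sqrt_sq hβ1]
      rw [← mul_assoc, ← mul_pow, this]
    have key := Finset.sum_mul_sq_le_sq_mul_sq (Finset.range t)
      (fun i => (Real.sqrt c) ^ i) (fun i => (Real.sqrt β2) ^ i * ‖g (t - i)‖)
    calc (∑ i ∈ Finset.range t, β1 ^ i * ‖g (t - i)‖) ^ 2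
        = (∑ i ∈ Finset.range t,
            (Real.sqrt c) ^ i * ((Real.sqrt β2) ^ i * ‖g (t - i)‖)) ^ 2 := by
          congr 1; exact Finset.sum_congr rfl fun i _ => hβ1split i
      _ ≤ (∑ i ∈ Finset.range t, ((Real.sqrt c) ^ i) ^ 2) *
          ∑ i ∈ Finset.range t, ((Real.sqrt β2) ^ i * ‖g (t - i)‖) ^ 2 := key
      _ = (∑ i ∈ Finset.range t, c ^ i) *
          ∑ i ∈ Finset.range t, β2 ^ i * ‖g (t - i)‖ ^ 2 := by
          congr 1
          · exact Finset.sum_congr rfl fun i _ => by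
              rw [← pow_mul, mul_comm i 2, pow_mul, Real.sq_sqrt hc0]
          · exact Finset.sum_congr rfl fun i _ => by
              rw [mul_pow, ← pow_mul, mul_comm i 2, pow_mul, Real.sq_sqrt hβ2]
  -- combine
  have hm2 : ‖m t‖ ^ 2 ≤ (1 - β1) ^ 2 * ((1 / (1 - c)) * (ν t / (1 - β2))) := by
    have h1 := hA t
    have hsnn : (0:ℝ) ≤ ∑ i ∈ Finset.range t, β1 ^ i * ‖g (t - i)‖ :=
      Finset.sum_nonneg fun i _ => mul_nonneg (pow_nonneg hβ1 _) (norm_nonneg _)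
    have h2 : ‖m t‖ ^ 2 ≤ (1 - β1) ^ 2 * (∑ i ∈ Finset.range t, β1 ^ i * ‖g (t - i)‖) ^ 2 := by
      rw [← mul_pow]
      exact pow_le_pow_left₀ (norm_nonneg _) h1 2
    have h3 : (∑ i ∈ Finset.range t, β1 ^ i * ‖g (t - i)‖) ^ 2
        ≤ (1 / (1 - c)) * (ν t / (1 - β2)) := by
      calc (∑ i ∈ Finset.range t, β1 ^ i * ‖g (t - i)‖) ^ 2
          ≤ (∑ i ∈ Finset.range t, c ^ i) *
            ∑ i ∈ Finset.range t, β2 ^ i * ‖g (t - i)‖ ^ 2 := hcs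
        _ ≤ (1 / (1 - c)) * (ν t / (1 - β2)) := by
            exact mul_le_mul hS1 hS2 hS2nn (div_nonneg one_pos.le (by linarith))
    nlinarith [sq_nonneg (1 - β1)]
  -- finish
  have hK : Real.sqrt (1 - β2) * Real.sqrt (1 - c) > 0 := by
    apply mul_pos <;> exact Real.sqrt_pos.2 (by linarith)
  rw [div_le_div_iff₀ (Real.sqrt_pos.2 hνpos) hK]
  have hrhs : (1 - β1) ^ 2 * ((1 / (1 - c)) * (ν t / (1 - β2)))
      = ((1 - β1) * Real.sqrt (ν t) / (Real.sqrt (1 - β2) * Real.sqrt (1 - c))) ^ 2 := by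
    rw [div_pow, mul_pow, mul_pow, Real.sq_sqrt hνpos.le, Real.sq_sqrt (by linarith : (0:ℝ) ≤ 1 - β2),
      Real.sq_sqrt (by linarith : (0:ℝ) ≤ 1 - c)]
    field_simp
  have hfin : ‖m t‖ ≤ (1 - β1) * Real.sqrt (ν t) / (Real.sqrt (1 - β2) * Real.sqrt (1 - c)) := by
    have hnn : (0:ℝ) ≤ (1 - β1) * Real.sqrt (ν t) / (Real.sqrt (1 - β2) * Real.sqrt (1 - c)) := by
      apply div_nonneg (mul_nonneg (by linarith) (Real.sqrt_nonneg _)) hK.le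
    have h5 : ‖m t‖ ^ 2
        ≤ ((1 - β1) * Real.sqrt (ν t) / (Real.sqrt (1 - β2) * Real.sqrt (1 - c))) ^ 2 :=
      hrhs ▸ hm2
    exact (pow_le_pow_iff_left₀ (norm_nonneg _) hnn (by norm_num)).mp h5
  calc ‖m t‖ * (Real.sqrt (1 - β2) * Real.sqrt (1 - c))
      ≤ ((1 - β1) * Real.sqrt (ν t) / (Real.sqrt (1 - β2) * Real.sqrt (1 - c))) *
        (Real.sqrt (1 - β2) * Real.sqrt (1 - c)) := by
        exact mul_le_mul_of_nonneg_right hfin hK.le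
    _ = (1 - β1) * Real.sqrt (ν t) := div_mul_cancel₀ _ hK.ne'
end

section
/- Let $0 < \beta_1$ and $\beta_1^2 < \beta_2 < 1$, let $(a_n)_{n \ge 1}$ be a sequence of real numbers, let $b_0 > 0$, $b_n = \beta_2 b_{n-1} + (1-\beta_2) a_n^2$, and $c_0 = 0$, $c_n = \beta_1 c_{n-1} + (1-\beta_1) a_n$. Then for all $T \ge 1$, $\sum_{n=1}^{T} \frac{c_n^2}{b_n} \le \frac{(1-\beta_1)^2}{(1 - \beta_1/\sqrt{\beta_2})^2 (1-\beta_2)} \left( \ln\frac{b_T}{b_0} - T \ln \beta_2 \right)$. -/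
/-!
Unrolling the recursion, `c n = (1 - β1) * ∑ k ≤ n, β1 ^ (n - k) * a k`. Write `β1 = ρ * √β2` with
`ρ = β1 / √β2 < 1`; Cauchy–Schwarz with weights `ρ ^ (n - k)` gives
`c n ^ 2 ≤ (1 - β1) ^ 2 / (1 - ρ) * ∑ k ≤ n, ρ ^ (n - k) * β2 ^ (n - k) * a k ^ 2`, and the decay
`β2 ^ (n - k) * b k ≤ b n` turns `c n ^ 2 / b n` into a geometric average of the `a k ^ 2 / b k`.
Summing over `n` costs a second factor `1 / (1 - ρ)`. Finally
`(1 - β2) * a k ^ 2 / b k = 1 - β2 * b (k - 1) / b k ≤ log (b k / (β2 * b (k - 1)))`,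
which telescopes.
-/

open Finset Real

theorem sq_sum_pow_mul_le {ι : Type*} (s : Finset ι) (e : ι → ℕ) (x : ι → ℝ) {β ρ δ : ℝ}
    (hρ : 0 ≤ ρ) (hδ : 0 ≤ δ) (h : β ^ 2 = ρ * δ) :
    (∑ i ∈ s, β ^ e i * x i) ^ 2 ≤ (∑ i ∈ s, ρ ^ e i) * ∑ i ∈ s, δ ^ e i * x i ^ 2 := by
  refine sum_sq_le_sum_mul_sum_of_sq_le_mul s (fun i _ => by positivity)
    (fun i _ => by positivity) fun i _ => le_of_eq ?_
  rw [mul_pow, ← pow_mul, mul_comm (e i), pow_mul, h, mul_pow]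
  ring

theorem sum_pow_le_inv_one_sub_of_injOn {ι : Type*} {s : Finset ι} {e : ι → ℕ}
    (he : Set.InjOn e s) {ρ : ℝ} (hρ0 : 0 ≤ ρ) (hρ1 : ρ < 1) :
    ∑ i ∈ s, ρ ^ e i ≤ (1 - ρ)⁻¹ := by
  rw [← sum_image he, ← tsum_geometric_of_lt_one hρ0 hρ1]
  exact (summable_geometric_of_lt_one hρ0 hρ1).sum_le_tsum _ fun j _ => pow_nonneg hρ0 j

theorem sum_Icc_sum_Icc_pow_sub_mul_le {ρ : ℝ} (hρ0 : 0 ≤ ρ) (hρ1 : ρ < 1) {x : ℕ → ℝ}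
    (hx : ∀ k, 0 ≤ x k) (T : ℕ) :
    ∑ n ∈ Icc 1 T, ∑ k ∈ Icc 1 n, ρ ^ (n - k) * x k ≤ (1 - ρ)⁻¹ * ∑ k ∈ Icc 1 T, x k := by
  rw [sum_comm' (t' := Icc 1 T) (s' := fun k => Icc k T) (by intro n k; simp only [mem_Icc]; omega),
    mul_sum]
  gcongr with k
  rw [← sum_mul]
  exact mul_le_mul_of_nonneg_right (sum_pow_le_inv_one_sub_of_injOn (fun n hn m hm h => by
    simp only [coe_Icc, Set.mem_Icc] at hn hm h ⊢; omega) hρ0 hρ1) (hx k)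

theorem pow_mul_le_of_mul_le_succ {β : ℝ} {b : ℕ → ℝ} (hβ : 0 ≤ β) (h : ∀ n, β * b n ≤ b (n + 1))
    (k n : ℕ) : β ^ n * b k ≤ b (k + n) := by
  induction n with
  | zero => simp
  | succ n ih =>
    calc β ^ (n + 1) * b k = β * (β ^ n * b k) := by ring
      _ ≤ β * b (k + n) := by gcongr
      _ ≤ b (k + n + 1) := h _

theorem ema_eq_sum_pow_mul {β : ℝ} {a c : ℕ → ℝ} (h0 : c 0 = 0)
    (h : ∀ n, c (n + 1) = β * c n + (1 - β) * a (n + 1)) (n : ℕ) :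
    c n = (1 - β) * ∑ k ∈ Icc 1 n, β ^ (n - k) * a k := by
  induction n with
  | zero => simp [h0]
  | succ n ih =>
    rw [h, ih, sum_Icc_succ_top (by omega), Nat.sub_self, pow_zero, one_mul, mul_add, mul_sum,
      mul_sum, mul_sum]
    congr 1
    refine sum_congr rfl fun k hk => ?_
    rw [mem_Icc] at hk
    rw [Nat.sub_add_comm hk.2, pow_succ]
    ring

theorem sub_div_le_log_sub_log {y z : ℝ} (hy : 0 < y) (hz : 0 < z) :
    (y - z) / y ≤ log y - log z := by
  have := one_sub_inv_le_log_of_pos (div_pos hy hz)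
  rwa [log_div hy.ne' hz.ne', inv_div, one_sub_div hy.ne'] at this

section EMA

variable {β : ℝ} {a b : ℕ → ℝ}

theorem mul_le_ema_sq_succ (hb : ∀ n, b (n + 1) = β * b n + (1 - β) * a (n + 1) ^ 2)
    (hβ : β ≤ 1) (n : ℕ) : β * b n ≤ b (n + 1) := by
  rw [hb]
  nlinarith [sq_nonneg (a (n + 1))]

theorem ema_sq_pos (hb : ∀ n, b (n + 1) = β * b n + (1 - β) * a (n + 1) ^ 2)
    (hβ0 : 0 < β) (hβ1 : β ≤ 1) (hb0 : 0 < b 0) (n : ℕ) : 0 < b n := by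
  simpa using (mul_pos (pow_pos hβ0 n) hb0).trans_le
    (pow_mul_le_of_mul_le_succ hβ0.le (mul_le_ema_sq_succ hb hβ1) 0 n)

theorem sum_sq_div_ema_le_log (hb : ∀ n, b (n + 1) = β * b n + (1 - β) * a (n + 1) ^ 2)
    (hβ0 : 0 < β) (hβ1 : β < 1) (hb0 : 0 < b 0) (T : ℕ) :
    ∑ n ∈ Icc 1 T, a n ^ 2 / b n ≤ (1 - β)⁻¹ * (log (b T / b 0) - T * log β) := by
  have hpos := ema_sq_pos hb hβ0 hβ1.le hb0
  induction T with
  | zero => simp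
  | succ T ih =>
    have hstep : a (T + 1) ^ 2 / b (T + 1) ≤ (1 - β)⁻¹ * (log (b (T + 1)) - log (β * b T)) := by
      rw [le_inv_mul_iff₀ (sub_pos.2 hβ1), ← mul_div_assoc,
        show (1 - β) * a (T + 1) ^ 2 = b (T + 1) - β * b T by rw [hb]; ring]
      exact sub_div_le_log_sub_log (hpos _) (mul_pos hβ0 (hpos T))
    calc ∑ n ∈ Icc 1 (T + 1), a n ^ 2 / b n
        = ∑ n ∈ Icc 1 T, a n ^ 2 / b n + a (T + 1) ^ 2 / b (T + 1) := sum_Icc_succ_top (by omega) _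
      _ ≤ (1 - β)⁻¹ * (log (b T / b 0) - T * log β)
          + (1 - β)⁻¹ * (log (b (T + 1)) - log (β * b T)) := add_le_add ih hstep
      _ = (1 - β)⁻¹ * (log (b (T + 1) / b 0) - (T + 1 : ℕ) * log β) := by
        rw [log_mul hβ0.ne' (hpos T).ne', log_div (hpos T).ne' hb0.ne',
          log_div (hpos _).ne' hb0.ne']
        push_cast
        ring

end EMA

theorem sq_ema_div_le_sum_pow_mul {β1 β2 : ℝ} {a b c : ℕ → ℝ} (hβ1 : 0 ≤ β1) (hβ2 : 0 < β2)
    (hρ : β1 / √β2 < 1) (hbpos : ∀ n, 0 < b n) (hbmono : ∀ n, β2 * b n ≤ b (n + 1))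
    (hc0 : c 0 = 0) (hc : ∀ n, c (n + 1) = β1 * c n + (1 - β1) * a (n + 1)) (n : ℕ) :
    c n ^ 2 / b n ≤
      (1 - β1) ^ 2 *
        ((1 - β1 / √β2)⁻¹ * ∑ k ∈ Icc 1 n, (β1 / √β2) ^ (n - k) * (a k ^ 2 / b k)) := by
  set ρ := β1 / √β2
  have hρ0 : 0 ≤ ρ := by positivity
  have hβ1ρ : β1 ^ 2 = ρ * (ρ * β2) := by
    rw [← mul_assoc, ← sq, div_pow, sq_sqrt hβ2.le, div_mul_cancel₀ _ hβ2.ne']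
  have hdecay : ∀ k ∈ Icc 1 n,
      (ρ * β2) ^ (n - k) * a k ^ 2 / b n ≤ ρ ^ (n - k) * (a k ^ 2 / b k) := by
    intro k hk
    have hkn : k + (n - k) = n := Nat.add_sub_cancel' (mem_Icc.1 hk).2
    have hb := pow_mul_le_of_mul_le_succ hβ2.le hbmono k (n - k)
    rw [hkn] at hb
    calc (ρ * β2) ^ (n - k) * a k ^ 2 / b n
        = ρ ^ (n - k) * a k ^ 2 * (β2 ^ (n - k) / b n) := by ring
      _ ≤ ρ ^ (n - k) * a k ^ 2 * (1 / b k) := by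
        refine mul_le_mul_of_nonneg_left ?_ (by positivity)
        rwa [div_le_div_iff₀ (hbpos n) (hbpos k), one_mul]
      _ = ρ ^ (n - k) * (a k ^ 2 / b k) := by ring
  rw [ema_eq_sum_pow_mul hc0 hc, mul_pow, mul_div_assoc]
  gcongr
  calc (∑ k ∈ Icc 1 n, β1 ^ (n - k) * a k) ^ 2 / b n
      ≤ (∑ k ∈ Icc 1 n, ρ ^ (n - k)) * (∑ k ∈ Icc 1 n, (ρ * β2) ^ (n - k) * a k ^ 2) / b n :=
        div_le_div_of_nonneg_right (sq_sum_pow_mul_le _ _ _ hρ0 (by positivity) hβ1ρ)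
          (hbpos n).le
    _ ≤ (1 - ρ)⁻¹ * ∑ k ∈ Icc 1 n, ρ ^ (n - k) * (a k ^ 2 / b k) := by
        rw [mul_div_assoc, sum_div]
        refine mul_le_mul (sum_pow_le_inv_one_sub_of_injOn (fun k hk l hl h => by
            simp only [coe_Icc, Set.mem_Icc] at hk hl h ⊢; omega) hρ0 hρ) (sum_le_sum hdecay)
          (sum_nonneg fun k _ => ?_) (inv_nonneg.2 (sub_nonneg.2 hρ.le))
        exact div_nonneg (mul_nonneg (pow_nonneg (mul_nonneg hρ0 hβ2.le) _) (sq_nonneg _))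
          (hbpos n).le

theorem ema_log_sum_bound_general (β1 β2 : ℝ) (hβ1 : 0 < β1) (hββ : β1 ^ 2 < β2) (hβ2 : β2 < 1)
    (a b c : ℕ → ℝ) (hb0 : 0 < b 0)
    (hb : ∀ n : ℕ, 1 ≤ n → b n = β2 * b (n - 1) + (1 - β2) * (a n) ^ 2)
    (hc0 : c 0 = 0) (hc : ∀ n : ℕ, 1 ≤ n → c n = β1 * c (n - 1) + (1 - β1) * a n)
    (T : ℕ) :
    ∑ n ∈ Finset.Icc 1 T, (c n) ^ 2 / b n ≤
      (1 - β1) ^ 2 / ((1 - β1 / Real.sqrt β2) ^ 2 * (1 - β2)) *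
        (Real.log (b T / b 0) - (T : ℝ) * Real.log β2) := by
  have hβ2pos : 0 < β2 := (pow_pos hβ1 2).trans hββ
  have hρ0 : 0 ≤ β1 / √β2 := by positivity
  have hρ1 : β1 / √β2 < 1 :=
    (div_lt_one (sqrt_pos.2 hβ2pos)).2 ((lt_sqrt hβ1.le).2 hββ)
  have hb' : ∀ n, b (n + 1) = β2 * b n + (1 - β2) * a (n + 1) ^ 2 :=
    fun n => hb (n + 1) le_add_self
  have hc' : ∀ n, c (n + 1) = β1 * c n + (1 - β1) * a (n + 1) :=
    fun n => hc (n + 1) le_add_self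
  have hbpos := ema_sq_pos hb' hβ2pos hβ2.le hb0
  calc ∑ n ∈ Icc 1 T, c n ^ 2 / b n
      ≤ ∑ n ∈ Icc 1 T, (1 - β1) ^ 2 * ((1 - β1 / √β2)⁻¹ *
          ∑ k ∈ Icc 1 n, (β1 / √β2) ^ (n - k) * (a k ^ 2 / b k)) :=
        sum_le_sum fun n _ => sq_ema_div_le_sum_pow_mul hβ1.le hβ2pos hρ1 hbpos
          (mul_le_ema_sq_succ hb' hβ2.le) hc0 hc' n
    _ ≤ (1 - β1) ^ 2 * ((1 - β1 / √β2)⁻¹ * ((1 - β1 / √β2)⁻¹ * ∑ k ∈ Icc 1 T, a k ^ 2 / b k)) := by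
        rw [← mul_sum, ← mul_sum]
        gcongr
        exact sum_Icc_sum_Icc_pow_sub_mul_le hρ0 hρ1
          (fun k => div_nonneg (sq_nonneg _) (hbpos k).le) T
    _ ≤ (1 - β1) ^ 2 * ((1 - β1 / √β2)⁻¹ * ((1 - β1 / √β2)⁻¹ *
          ((1 - β2)⁻¹ * (log (b T / b 0) - T * log β2)))) := by
        gcongr
        exact sum_sq_div_ema_le_log hb' hβ2pos hβ2 hb0 T
    _ = _ := by
        rw [div_eq_mul_inv ((1 - β1) ^ 2), mul_inv, ← inv_pow]
        ring

theorem ema_log_sum_bound (β1 β2 : ℝ) (hβ1 : 0 < β1) (hββ : β1 ^ 2 < β2) (hβ2 : β2 < 1)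
    (a b c : ℕ → ℝ) (hb0 : 0 < b 0)
    (hb : ∀ n : ℕ, 1 ≤ n → b n = β2 * b (n - 1) + (1 - β2) * (a n) ^ 2)
    (hc0 : c 0 = 0) (hc : ∀ n : ℕ, 1 ≤ n → c n = β1 * c (n - 1) + (1 - β1) * a n)
    (T : ℕ) (hT : 1 ≤ T) :
    ∑ n ∈ Finset.Icc 1 T, (c n) ^ 2 / b n ≤
      (1 - β1) ^ 2 / ((1 - β1 / Real.sqrt β2) ^ 2 * (1 - β2)) *
        (Real.log (b T / b 0) - (T : ℝ) * Real.log β2) :=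
  ema_log_sum_bound_general β1 β2 hβ1 hββ hβ2 a b c hb0 hb hc0 hc T
end

section
/- Fix $\varepsilon > 0$ and $L_0, L_1 > 0$ with $\varepsilon \le L_0$. Define $f_2: \mathbb{R} \to \mathbb{R}$ by $f_2(y) = \varepsilon(y-1) + \varepsilon/2$ for $y \ge 1$, $f_2(y) = \frac{\varepsilon}{2} y^2$ for $|y| \le 1$, and $f_2(y) = -\varepsilon(y+1) + \varepsilon/2$ for $y \le -1$. Then $f_2$ is continuously differentiable, $|f_2'(y)| \le \varepsilon$ for all $y$, and $f_2$ satisfies the $(L_0, L_1)$-smooth condition. -/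
/-!
The derivative of `f2 ε` is `ε` times the clamp `max (-1) (min y 1)` of `y` to `[-1, 1]`. Since
`f2 ε = ε • f2 1`, it suffices to treat `ε = 1`, where the first-order Taylor remainder of `f2 1`
is at most `(y - x) ^ 2 / 2` in every one of the nine position cases of `x` and `y` relative to
`±1`; a quadratic remainder bound forces differentiability. The clamp is `1`-Lipschitz and bounded
by `1`, so `deriv (f2 ε)` is `ε`-Lipschitz and bounded by `ε`, and an `ε`-Lipschitz derivative
satisfies the `(L0, L1)` condition for every `L0 ≥ ε` and `L1 ≥ 0`.
-/

noncomputable def f2 (ε : ℝ) (y : ℝ) : ℝ :=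
  if 1 ≤ y then ε * (y - 1) + ε / 2
  else if y ≤ -1 then -ε * (y + 1) + ε / 2
  else ε / 2 * y ^ 2

open Filter Asymptotics Topology

theorem hasDerivAt_of_abs_sub_sub_le_mul_sq {f : ℝ → ℝ} {f' x C : ℝ}
    (h : ∀ y, |f y - f x - f' * (y - x)| ≤ C * (y - x) ^ 2) : HasDerivAt f f' x := by
  rw [hasDerivAt_iff_isLittleO]
  have hsq : (fun y => (y - x) ^ 2) =o[𝓝 x] fun y => y - x :=
    (isLittleO_pow_id one_lt_two).comp_tendsto (tendsto_sub_nhds_zero_iff.mpr tendsto_id)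
  refine (IsBigO.of_bound C (Eventually.of_forall fun y => ?_)).trans_isLittleO hsq
  simpa [mul_comm f', abs_of_nonneg (sq_nonneg (y - x))] using h y

theorem abs_sub_le_add_mul_abs_mul {g : ℝ → ℝ} {K L0 L1 : ℝ}
    (hg : ∀ x y, |g x - g y| ≤ K * |x - y|) (hK : K ≤ L0) (hL1 : 0 ≤ L1) (x y : ℝ) :
    |g x - g y| ≤ (L0 + L1 * |g x|) * |x - y| :=
  calc |g x - g y| ≤ K * |x - y| := hg x y
    _ ≤ (L0 + L1 * |g x|) * |x - y| := by
      gcongr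
      linarith [mul_nonneg hL1 (abs_nonneg (g x))]

theorem abs_max_neg_one_min_one_le (y : ℝ) : |max (-1) (min y 1)| ≤ 1 :=
  abs_le.mpr ⟨le_max_left _ _, max_le (by norm_num) (min_le_right _ _)⟩

theorem abs_max_neg_one_min_one_sub_le (x y : ℝ) :
    |max (-1) (min x 1) - max (-1) (min y 1)| ≤ |x - y| := by
  simpa [Real.dist_eq] using ((LipschitzWith.id.min_const 1).const_max (-1)).dist_le_mul x y

theorem f2_eq_mul (ε y : ℝ) : f2 ε y = ε * f2 1 y := by
  unfold f2
  split_ifs <;> ring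

theorem abs_f2_one_sub_sub_le (x y : ℝ) :
    |f2 1 y - f2 1 x - max (-1) (min x 1) * (y - x)| ≤ 1 / 2 * (y - x) ^ 2 := by
  rw [abs_le]
  unfold f2
  simp only [min_def, max_def]
  split_ifs <;> constructor <;> nlinarith

theorem hasDerivAt_f2 (ε y : ℝ) : HasDerivAt (f2 ε) (ε * max (-1) (min y 1)) y := by
  have h1 : HasDerivAt (f2 1) (max (-1) (min y 1)) y :=
    hasDerivAt_of_abs_sub_sub_le_mul_sq (abs_f2_one_sub_sub_le y)
  simpa only [← f2_eq_mul] using h1.const_mul ε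

theorem deriv_f2 (ε : ℝ) : deriv (f2 ε) = fun y => ε * max (-1) (min y 1) :=
  funext fun y => (hasDerivAt_f2 ε y).deriv

theorem abs_deriv_f2_sub_le {ε : ℝ} (hε : 0 ≤ ε) (x y : ℝ) :
    |deriv (f2 ε) x - deriv (f2 ε) y| ≤ ε * |x - y| := by
  rw [deriv_f2, ← mul_sub, abs_mul, abs_of_nonneg hε]
  exact mul_le_mul_of_nonneg_left (abs_max_neg_one_min_one_sub_le x y) hε

theorem f2_is_L0L1_smooth_general (ε L0 L1 : ℝ) (hε : 0 < ε) (hL1 : 0 < L1)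
    (hεL0 : ε ≤ L0) :
    ContDiff ℝ 1 (f2 ε) ∧
    (∀ y : ℝ, |deriv (f2 ε) y| ≤ ε) ∧
    (∀ x y : ℝ, |x - y| ≤ 1 / L1 →
      |deriv (f2 ε) x - deriv (f2 ε) y| ≤ (L0 + L1 * |deriv (f2 ε) x|) * |x - y|) := by
  refine ⟨?_, fun y => ?_, fun x y _ => ?_⟩
  · rw [contDiff_one_iff_deriv, deriv_f2]
    exact ⟨fun y => (hasDerivAt_f2 ε y).differentiableAt, by fun_prop⟩
  · rw [deriv_f2, abs_mul, abs_of_pos hε]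
    exact mul_le_of_le_one_right hε.le (abs_max_neg_one_min_one_le y)
  · exact abs_sub_le_add_mul_abs_mul (abs_deriv_f2_sub_le hε.le) hεL0 hL1.le x y

theorem f2_is_L0L1_smooth (ε L0 L1 : ℝ) (hε : 0 < ε) (hL0 : 0 < L0) (hL1 : 0 < L1)
    (hεL0 : ε ≤ L0) :
    ContDiff ℝ 1 (f2 ε) ∧
    (∀ y : ℝ, |deriv (f2 ε) y| ≤ ε) ∧
    (∀ x y : ℝ, |x - y| ≤ 1 / L1 →
      |deriv (f2 ε) x - deriv (f2 ε) y| ≤ (L0 + L1 * |deriv (f2 ε) x|) * |x - y|) :=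
  f2_is_L0L1_smooth_general ε L0 L1 hε hL1 hεL0
end

section
/- Fix $\varepsilon, \Delta_1, L_0, L_1 > 0$ with $\Delta_1 \ge \varepsilon/2 + L_1/L_0$. Let $f_2(y) = \varepsilon(y-1) + \varepsilon/2$ for $y \ge 1$, $f_2(y) = \frac{\varepsilon}{2}y^2$ for $|y| \le 1$, $f_2(y) = -\varepsilon(y+1) + \varepsilon/2$ for $y \le -1$, and set $y_1 = \Delta_1/\varepsilon + 1/2$. Consider gradient descent with momentum: $m_0 = 0$, $m_t = \beta m_{t-1} + (1-\beta) f_2'(y_t)$, $y_{t+1} = y_t - \eta m_t$, with any $\beta \in [0,1)$ and learning rate $\eta \le \frac{(5 + 8\log(1/\varepsilon))(1 + \log(1/2 + L_1^2\Delta_1/L_0))}{L_1^2(\Delta_1 + L_0/(2L_1^2))}$. Then $|f_2'(y_t)| \ge \varepsilon$ for all $t \le (y_1 - 1)/(\eta\varepsilon)$. -/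
lemma deriv_f2_of_gt (ε x : ℝ) (hx : 1 < x) : deriv (f2 ε) x = ε := by
  have h : f2 ε =ᶠ[nhds x] fun z => ε * (z - 1) + ε / 2 := by
    filter_upwards [lt_mem_nhds hx] with z hz
    simp [f2, le_of_lt hz]
  rw [Filter.EventuallyEq.deriv_eq h]
  have hd : HasDerivAt (fun z => ε * (z - 1) + ε / 2) (ε * 1) x :=
    (((hasDerivAt_id x).sub_const 1).const_mul ε).add_const (ε / 2)
  simpa using hd.deriv

theorem gdm_slow_on_f2 (ε Δ1 L0 L1 η β : ℝ)
    (hε : 0 < ε) (hΔ : 0 < Δ1) (hL0 : 0 < L0) (hL1 : 0 < L1)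
    (hΔ1 : Δ1 ≥ ε / 2 + L1 / L0)
    (hβ0 : 0 ≤ β) (hβ1 : β < 1) (hη : 0 < η)
    (hηle : η ≤ (5 + 8 * Real.log (1 / ε)) * (1 + Real.log (1 / 2 + L1 ^ 2 * Δ1 / L0)) /
      (L1 ^ 2 * (Δ1 + L0 / (2 * L1 ^ 2))))
    (y m : ℕ → ℝ) (hy1 : y 1 = Δ1 / ε + 1 / 2) (hm0 : m 0 = 0)
    (hm : ∀ t : ℕ, 1 ≤ t → m t = β * m (t - 1) + (1 - β) * deriv (f2 ε) (y t))
    (hyupd : ∀ t : ℕ, 1 ≤ t → y (t + 1) = y t - η * m t) :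
    ∀ t : ℕ, 1 ≤ t → (t : ℝ) ≤ (y 1 - 1) / (η * ε) → ε ≤ |deriv (f2 ε) (y t)| := by
  have hηε : 0 < η * ε := mul_pos hη hε
  have hy1gt : 1 < y 1 := by
    rw [hy1]
    have h2 : (1 : ℝ) / 2 < Δ1 / ε := by
      rw [div_lt_div_iff₀ (by norm_num) hε]
      have := div_pos hL1 hL0
      nlinarith
    linarith
  -- convert the bound
  have hbound : ∀ t : ℕ, (t : ℝ) ≤ (y 1 - 1) / (η * ε) → (t : ℝ) * (η * ε) ≤ y 1 - 1 := by
    intro t ht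
    exact (le_div_iff₀ hηε).mp ht
  have key : ∀ t : ℕ, 1 ≤ t → (t : ℝ) ≤ (y 1 - 1) / (η * ε) →
      y 1 - ((t : ℝ) - 1) * (η * ε) ≤ y t ∧ 0 ≤ m t ∧ m t ≤ ε := by
    intro t ht
    induction t, ht using Nat.le_induction with
    | base =>
      intro _
      refine ⟨by norm_num, ?_, ?_⟩ <;>
      · have hm1 : m 1 = (1 - β) * ε := by
          rw [hm 1 le_rfl]
          simp [hm0, deriv_f2_of_gt ε (y 1) hy1gt]
        rw [hm1]; nlinarith
    | succ n hn IH =>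
      intro hB
      have hnB : (n : ℝ) ≤ (y 1 - 1) / (η * ε) := by
        have : (n : ℝ) ≤ (n : ℝ) + 1 := by linarith
        push_cast at hB; linarith
      obtain ⟨hyn, hmn0, hmnε⟩ := IH hnB
      have hB' : ((n : ℝ) + 1) * (η * ε) ≤ y 1 - 1 := by
        have := hbound (n + 1) hB; push_cast at this; linarith
    -- y (n+1) lower bound
      have hyupd' := hyupd n hn
      have hstep : η * m n ≤ η * ε := by nlinarith
      have hyn1 : y 1 - ((n : ℝ) + 1 - 1) * (η * ε) ≤ y (n + 1) := by
        rw [hyupd']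
        have : ((n : ℝ) + 1 - 1) * (η * ε) = ((n : ℝ) - 1) * (η * ε) + η * ε := by ring
        linarith
      have hyn1gt : 1 < y (n + 1) := by
        have : y 1 - ((n : ℝ) + 1 - 1) * (η * ε) ≥ 1 + η * ε := by nlinarith
        linarith
      refine ⟨by push_cast; exact_mod_cast hyn1, ?_, ?_⟩ <;>
      · have hmn1 : m (n + 1) = β * m n + (1 - β) * ε := by
          rw [hm (n + 1) (by omega)]
          simp [deriv_f2_of_gt ε (y (n + 1)) hyn1gt]
        rw [hmn1]; nlinarith
  intro t ht htB
  obtain ⟨h1, -, -⟩ := key t ht htB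
  have htb := hbound t htB
  have hytgt : 1 < y t := by
    have hr : ((t : ℝ) - 1) * (η * ε) = (t : ℝ) * (η * ε) - η * ε := by ring
    linarith
  rw [deriv_f2_of_gt ε (y t) hytgt, abs_of_pos hε]
end

section
/- Let $\beta_2 \in [1/2, 1)$ and let $(\nu_t)$ satisfy $\nu_t = \beta_2\nu_{t-1} + (1-\beta_2)\|g_t\|^2$ with $\nu_0 > 0$, and define $\widetilde\nu_t = \beta_2\nu_{t-1} + (1-\beta_2)\sigma_0^2$ for some $\sigma_0 > 0$. Then for every $t \ge 1$ and every vector $G_t$: $\left( \frac{1}{\sqrt{\beta_2\widetilde\nu_t}} - \frac{1}{\sqrt{\widetilde\nu_{t+1}}} \right)\|G_t\|^2 \ge \frac{1}{4} \cdot \frac{(1-\beta_2)\|g_t\|^2 \|G_t\|^2}{\sqrt{\widetilde\nu_t}\,(\sqrt{\nu_t} + \sqrt{\widetilde\nu_t})^2}$. -/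
private lemma surrogate_aux (β2 a b νt gsq : ℝ) (hβ2 : 1/2 ≤ β2) (hβ2' : β2 < 1)
    (ha : 0 < a) (hb : 0 < b) (hνt : 0 < νt) (hg : 0 ≤ gsq)
    (hd : β2 * ((1 - β2) * gsq) ≤ b - β2 * a)
    (hba : b ≤ νt + a) :
    (1/4) * ((1 - β2) * gsq / (Real.sqrt a * (Real.sqrt νt + Real.sqrt a)^2)) ≤
      1 / Real.sqrt (β2 * a) - 1 / Real.sqrt b := by
  have hβpos : (0:ℝ) < β2 := by linarith
  have h1β : (0:ℝ) < 1 - β2 := by linarith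
  set x := Real.sqrt (β2 * a) with hx_def
  set y := Real.sqrt b with hy_def
  set sa := Real.sqrt a with hsa_def
  set sn := Real.sqrt νt with hsn_def
  have hxpos : 0 < x := Real.sqrt_pos.2 (by positivity)
  have hypos : 0 < y := Real.sqrt_pos.2 hb
  have hsapos : 0 < sa := Real.sqrt_pos.2 ha
  have hsnpos : 0 < sn := Real.sqrt_pos.2 hνt
  have hx2 : x ^ 2 = β2 * a := Real.sq_sqrt (by positivity)
  have hy2 : y ^ 2 = b := Real.sq_sqrt hb.le
  have hsa2 : sa ^ 2 = a := Real.sq_sqrt ha.le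
  have hsn2 : sn ^ 2 = νt := Real.sq_sqrt hνt.le
  have hxsa : x ≤ sa := by
    rw [hx_def, hsa_def]
    exact Real.sqrt_le_sqrt (by nlinarith)
  have hysnsa : y ≤ sn + sa := by
    have h1 : y ≤ Real.sqrt (νt + a) := Real.sqrt_le_sqrt hba
    refine h1.trans ?_
    have h2 : νt + a ≤ (sn + sa)^2 := by
      have h3 : (sn + sa)^2 = sn^2 + sa^2 + 2*(sn*sa) := by ring
      have h4 : 0 ≤ sn * sa := mul_nonneg hsnpos.le hsapos.le
      rw [h3, hsn2, hsa2]; linarith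
    calc Real.sqrt (νt + a) ≤ Real.sqrt ((sn + sa)^2) := Real.sqrt_le_sqrt h2
      _ = sn + sa := Real.sqrt_sq (by positivity)
  have hid : 1/x - 1/y = (b - β2 * a) / (x * y * (x + y)) := by
    rw [div_sub_div _ _ hxpos.ne' hypos.ne']
    rw [div_eq_div_iff (by positivity) (by positivity)]
    have hr : (1*y - x*1) * (x*y*(x+y)) = x*y*(y^2 - x^2) := by ring
    rw [hr, hx2, hy2]; ring
  rw [hid]
  have hD2pos : 0 < x * y * (x + y) := by positivity
  have hxeq : x = Real.sqrt β2 * sa := by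
    rw [hx_def, hsa_def, Real.sqrt_mul hβpos.le]
  have hsb2 : Real.sqrt β2 ^ 2 = β2 := Real.sq_sqrt hβpos.le
  have hsbhalf : 1/2 ≤ Real.sqrt β2 := by
    have h5 : Real.sqrt ((1:ℝ)/4) ≤ Real.sqrt β2 := Real.sqrt_le_sqrt (by linarith)
    rw [show (1/4 : ℝ) = (1/2)^2 by norm_num, Real.sqrt_sq (by norm_num)] at h5
    linarith
  have hD2le : x * y * (x + y) ≤ 4 * β2 * (sa * (sn + sa)^2) := by
    have hxsnsa : x ≤ sn + sa := hxsa.trans (by linarith)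
    have hybd : y * (x + y) ≤ 2 * (sn + sa)^2 := by
      have h1 : y * (x + y) ≤ (sn + sa) * (x + y) :=
        mul_le_mul_of_nonneg_right hysnsa (by positivity)
      have h2 : (sn + sa) * (x + y) ≤ (sn + sa) * ((sn + sa) + (sn + sa)) :=
        mul_le_mul_of_nonneg_left (add_le_add hxsnsa hysnsa) (by positivity)
      nlinarith [h1, h2]
    have hsbb : 2 * Real.sqrt β2 ≤ 4 * β2 := by
      nlinarith [mul_le_mul_of_nonneg_right hsbhalf (Real.sqrt_nonneg β2), hsb2]
    calc x * y * (x + y) = x * (y * (x + y)) := by ring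
      _ ≤ x * (2 * (sn + sa)^2) := mul_le_mul_of_nonneg_left hybd hxpos.le
      _ = (2 * Real.sqrt β2) * (sa * (sn + sa)^2) := by rw [hxeq]; ring
      _ ≤ (4 * β2) * (sa * (sn + sa)^2) :=
          mul_le_mul_of_nonneg_right hsbb (by positivity)
      _ = 4 * β2 * (sa * (sn + sa)^2) := by ring
  rw [show (1/4 : ℝ) * ((1 - β2) * gsq / (sa * (sn + sa)^2)) =
      (1 - β2) * gsq / (sa * (sn + sa)^2 * 4) by
        rw [mul_comm, mul_one_div, div_div]]
  rw [div_le_div_iff₀ (by positivity) hD2pos]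
  calc (1 - β2) * gsq * (x * y * (x + y))
      ≤ (1 - β2) * gsq * (4 * β2 * (sa * (sn + sa)^2)) :=
        mul_le_mul_of_nonneg_left hD2le (by positivity)
    _ = (β2 * ((1 - β2) * gsq)) * (sa * (sn + sa)^2 * 4) := by ring
    _ ≤ (b - β2 * a) * (sa * (sn + sa)^2 * 4) :=
        mul_le_mul_of_nonneg_right hd (by positivity)

theorem surrogate_nu_telescoping {E : Type*} [NormedAddCommGroup E] [InnerProductSpace ℝ E]
    (β2 σ0 : ℝ) (hβ2 : 1 / 2 ≤ β2) (hβ2' : β2 < 1) (hσ0 : 0 < σ0)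
    (g : ℕ → E) (ν νtil : ℕ → ℝ) (hν0 : 0 < ν 0)
    (hν : ∀ t : ℕ, 1 ≤ t → ν t = β2 * ν (t - 1) + (1 - β2) * ‖g t‖ ^ 2)
    (hνtil : ∀ t : ℕ, 1 ≤ t → νtil t = β2 * ν (t - 1) + (1 - β2) * σ0 ^ 2)
    (t : ℕ) (ht : 1 ≤ t) (G : E) :
    (1 / 4) * ((1 - β2) * ‖g t‖ ^ 2 * ‖G‖ ^ 2 /
        (Real.sqrt (νtil t) * (Real.sqrt (ν t) + Real.sqrt (νtil t)) ^ 2)) ≤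
      (1 / Real.sqrt (β2 * νtil t) - 1 / Real.sqrt (νtil (t + 1))) * ‖G‖ ^ 2 := by
  have hβpos : (0:ℝ) < β2 := lt_of_lt_of_le (by norm_num) hβ2
  have h1β : (0:ℝ) < 1 - β2 := by linarith
  have hνpos : ∀ s, 0 < ν s := by
    intro s
    induction s with
    | zero => exact hν0
    | succ n ih =>
      rw [hν (n+1) (Nat.le_add_left 1 n)]
      simp only [Nat.add_sub_cancel]
      have h1 : 0 ≤ (1 - β2) * ‖g (n+1)‖ ^ 2 := by positivity
      have h2 : 0 < β2 * ν n := by positivity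
      linarith
  have ha : νtil t = β2 * ν (t-1) + (1 - β2) * σ0 ^ 2 := hνtil t ht
  have hb : νtil (t+1) = β2 * ν t + (1 - β2) * σ0 ^ 2 := by
    have := hνtil (t+1) (Nat.le_add_left 1 t)
    simpa using this
  have hapos : 0 < νtil t := by rw [ha]; have := hνpos (t-1); positivity
  have hbpos : 0 < νtil (t+1) := by rw [hb]; have := hνpos t; positivity
  have hνt := hν t ht
  have hg : (0:ℝ) ≤ ‖g t‖ ^ 2 := by positivity
  have hd : β2 * ((1 - β2) * ‖g t‖ ^ 2) ≤ νtil (t+1) - β2 * νtil t := by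
    rw [hb, ha, hνt]
    have : 0 ≤ (1 - β2)^2 * σ0 ^ 2 := by positivity
    nlinarith [this]
  have hba : νtil (t+1) ≤ ν t + νtil t := by
    rw [hb, ha]
    have h1 : 0 ≤ (1 - β2) * ν t := by have := hνpos t; positivity
    have h2 : 0 ≤ β2 * ν (t-1) := by have := hνpos (t-1); positivity
    linarith
  have hkey := surrogate_aux β2 (νtil t) (νtil (t+1)) (ν t) (‖g t‖ ^ 2)
    hβ2 hβ2' hapos hbpos (hνpos t) hg hd hba
  have hG : (0:ℝ) ≤ ‖G‖ ^ 2 := by positivity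
  calc (1 / 4) * ((1 - β2) * ‖g t‖ ^ 2 * ‖G‖ ^ 2 /
        (Real.sqrt (νtil t) * (Real.sqrt (ν t) + Real.sqrt (νtil t)) ^ 2))
      = ((1/4) * ((1 - β2) * ‖g t‖ ^ 2 /
        (Real.sqrt (νtil t) * (Real.sqrt (ν t) + Real.sqrt (νtil t)) ^ 2))) * ‖G‖ ^ 2 := by
        ring
    _ ≤ (1 / Real.sqrt (β2 * νtil t) - 1 / Real.sqrt (νtil (t + 1))) * ‖G‖ ^ 2 :=
        mul_le_mul_of_nonneg_right hkey hG
end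

section
/- Let $\beta_1 \in (0,1)$, $\beta_2 \in (\beta_1^2, 1)$, $\eta > 0$, and let $(w_t, m_t, \nu_t)$ be Adam iterates with $m_t = \beta_1 m_{t-1} + (1-\beta_1) g_t$, $\nu_t = \beta_2\nu_{t-1} + (1-\beta_2)\|g_t\|^2$, $w_{t+1} = w_t - \eta m_t/\sqrt{\nu_t}$. Define $u_t = \frac{w_t - (\beta_1/\sqrt{\beta_2})w_{t-1}}{1 - \beta_1/\sqrt{\beta_2}}$. Then the virtual-iterate increment admits the decomposition $u_{t+1} - u_t = \frac{1}{1 - \beta_1/\sqrt{\beta_2}}\left( -\eta\frac{(1-\beta_1)g_t}{\sqrt{\nu_t}} + \eta \frac{\beta_1(1-\beta_2)\|g_t\|^2}{\sqrt{\beta_2}} \cdot \frac{m_{t-1}}{\sqrt{\nu_{t-1}}\sqrt{\nu_t}(\sqrt{\nu_t} + \sqrt{\beta_2\nu_{t-1}})} \right)$. -/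
/-!
Both `w_{t+1} - w_t = -η m_t / √ν_t` and `w_t - w_{t-1} = -η m_{t-1} / √ν_{t-1}` are explicit, so
`u_{t+1} - u_t` is a combination of `m_t` and `m_{t-1}`. Substituting `m_t = β₁ m_{t-1} + (1 - β₁) g_t`
leaves the coefficient `η β₁ (1 / √(β₂ ν_{t-1}) - 1 / √ν_t)` on `m_{t-1}`, and rationalising this
difference of inverse square roots turns `ν_t - β₂ ν_{t-1}` into `(1 - β₂) ‖g_t‖²`.
-/

lemma ema_pos {β : ℝ} {ν x : ℕ → ℝ} (hβ : 0 < β) (hβ1 : β ≤ 1) (hx : ∀ t, 0 ≤ x t)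
    (h0 : 0 < ν 0) (hν : ∀ t, 1 ≤ t → ν t = β * ν (t - 1) + (1 - β) * x t) :
    ∀ t, 0 < ν t
  | 0 => h0
  | t + 1 => by
    rw [hν (t + 1) (by omega), Nat.add_sub_cancel]
    have ih := ema_pos hβ hβ1 hx h0 hν t
    have hstep : 0 ≤ (1 - β) * x (t + 1) := mul_nonneg (by linarith) (hx _)
    positivity

lemma inv_sqrt_mul_sub_inv_sqrt {β p q : ℝ} (hβ : 0 < β) (hp : 0 < p) (hq : 0 < q) :
    (√β * √p)⁻¹ - (√q)⁻¹ = (q - β * p) / √β / (√p * √q * (√q + √(β * p))) := by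
  have hs := Real.sqrt_pos.mpr hβ
  have ha := Real.sqrt_pos.mpr hp
  have hb := Real.sqrt_pos.mpr hq
  have hq_sq := Real.sq_sqrt hq.le
  have hβp_sq : β * p = √β ^ 2 * √p ^ 2 := by rw [Real.sq_sqrt hβ.le, Real.sq_sqrt hp.le]
  rw [Real.sqrt_mul hβ.le, hβp_sq]
  field_simp
  linear_combination hq_sq

lemma sub_sub_sub_of_momentum_step {E : Type*} [AddCommGroup E] [Module ℝ E]
    {η β1 s a b : ℝ} {w₀ w₁ w₂ m₀ g : E}
    (hw₁ : w₁ = w₀ - (η / a) • m₀) (hw₂ : w₂ = w₁ - (η / b) • (β1 • m₀ + (1 - β1) • g)) :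
    (w₂ - (β1 / s) • w₁) - (w₁ - (β1 / s) • w₀) =
      (-(η * (1 - β1) / b)) • g + (η * β1 * ((s * a)⁻¹ - b⁻¹)) • m₀ := by
  subst hw₁ hw₂
  module

theorem virtual_iterate_increment_general {E : Type*} [NormedAddCommGroup E] [InnerProductSpace ℝ E]
    (β1 β2 η : ℝ) (hββ : β1 ^ 2 < β2) (hβ2 : β2 < 1)
    (g m w : ℕ → E) (ν : ℕ → ℝ) (hν0 : 0 < ν 0)
    (hm : ∀ t : ℕ, 1 ≤ t → m t = β1 • m (t - 1) + (1 - β1) • g t)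
    (hν : ∀ t : ℕ, 1 ≤ t → ν t = β2 * ν (t - 1) + (1 - β2) * ‖g t‖ ^ 2)
    (hw : ∀ t : ℕ, 1 ≤ t → w (t + 1) = w t - (η / Real.sqrt (ν t)) • m t)
    (u : ℕ → E)
    (hu : ∀ t : ℕ, 2 ≤ t →
      u t = (1 - β1 / Real.sqrt β2)⁻¹ • (w t - (β1 / Real.sqrt β2) • w (t - 1))) :
    ∀ t : ℕ, 2 ≤ t →
      u (t + 1) - u t =
        (1 - β1 / Real.sqrt β2)⁻¹ •
          ((-(η * (1 - β1) / Real.sqrt (ν t))) • g t +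
            (η * (β1 * (1 - β2) * ‖g t‖ ^ 2 / Real.sqrt β2) /
              (Real.sqrt (ν (t - 1)) * Real.sqrt (ν t) *
                (Real.sqrt (ν t) + Real.sqrt (β2 * ν (t - 1))))) • m (t - 1)) := by
  intro t ht
  have hβ2pos : 0 < β2 := (sq_nonneg β1).trans_lt hββ
  have hνpos := ema_pos hβ2pos hβ2.le (fun t => sq_nonneg ‖g t‖) hν0 hν
  have hw_prev : w t = w (t - 1) - (η / √(ν (t - 1))) • m (t - 1) := by
    simpa [Nat.sub_add_cancel (by omega : 1 ≤ t)] using hw (t - 1) (by omega)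
  have hw_next := hw t (by omega)
  rw [hm t (by omega)] at hw_next
  have hu_next := hu (t + 1) (by omega)
  rw [Nat.add_sub_cancel] at hu_next
  rw [hu_next, hu t ht, ← smul_sub, sub_sub_sub_of_momentum_step hw_prev hw_next,
    inv_sqrt_mul_sub_inv_sqrt hβ2pos (hνpos _) (hνpos _), hν t (by omega)]
  congr 3
  ring

theorem virtual_iterate_increment {E : Type*} [NormedAddCommGroup E] [InnerProductSpace ℝ E]
    (β1 β2 η : ℝ) (hβ1 : 0 < β1) (hβ1' : β1 < 1) (hββ : β1 ^ 2 < β2) (hβ2 : β2 < 1)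
    (hη : 0 < η)
    (g m w : ℕ → E) (ν : ℕ → ℝ) (hm0 : m 0 = 0) (hν0 : 0 < ν 0)
    (hm : ∀ t : ℕ, 1 ≤ t → m t = β1 • m (t - 1) + (1 - β1) • g t)
    (hν : ∀ t : ℕ, 1 ≤ t → ν t = β2 * ν (t - 1) + (1 - β2) * ‖g t‖ ^ 2)
    (hw : ∀ t : ℕ, 1 ≤ t → w (t + 1) = w t - (η / Real.sqrt (ν t)) • m t)
    (u : ℕ → E)
    (hu : ∀ t : ℕ, 2 ≤ t →
      u t = (1 - β1 / Real.sqrt β2)⁻¹ • (w t - (β1 / Real.sqrt β2) • w (t - 1))) :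
    ∀ t : ℕ, 2 ≤ t →
      u (t + 1) - u t =
        (1 - β1 / Real.sqrt β2)⁻¹ •
          ((-(η * (1 - β1) / Real.sqrt (ν t))) • g t +
            (η * (β1 * (1 - β2) * ‖g t‖ ^ 2 / Real.sqrt β2) /
              (Real.sqrt (ν (t - 1)) * Real.sqrt (ν t) *
                (Real.sqrt (ν t) + Real.sqrt (β2 * ν (t - 1))))) • m (t - 1)) :=
  virtual_iterate_increment_general β1 β2 η hββ hβ2 g m w ν hν0 hm hν hw u hu
end

section
/- Let $0 \le \beta_1 < \beta_2^{1/4}$ with $\beta_2 \in (0,1)$, and let $(m_t), (\nu_t)$ be Adam sequences with $m_t = \beta_1 m_{t-1} + (1-\beta_1)G_t$, $\nu_t = \beta_2\nu_{t-1} + (1-\beta_2)\|G_t\|^2$, $m_0 = 0$, $\nu_0 > 0$. Then for each $t \ge 1$: $-\left\langle G_t, \frac{m_t}{\sqrt{\nu_t}} \right\rangle \le -\frac{1 - \beta_1/\beta_2^{1/4}}{1-\beta_1} \cdot \frac{\|m_t\|^2}{\sqrt{\nu_t}} - \frac{\beta_1}{2(1-\beta_1)\beta_2^{1/4}}\frac{\|m_t\|^2}{\sqrt{\nu_t}}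 + \frac{\beta_1}{2(1-\beta_1)\beta_2^{1/4}}\frac{\|m_{t-1}\|^2}{\sqrt{\nu_{t-1}}}$. -/
open scoped RealInnerProductSpace

theorem young_step (b p p' A B I : ℝ) (hb : 0 < b) (hp : 0 < p) (hp' : 0 < p')
    (hA : 0 ≤ A) (hB : 0 ≤ B) (hI : I ≤ A * B) (hs : b * p' ≤ p) :
    I / p ^ 2 ≤ (1 / (2 * b)) * (A ^ 2 / p ^ 2 + B ^ 2 / p' ^ 2) := by
  rw [div_le_iff₀ (by positivity)]
  have h1 : (1 / (2 * b)) * (A ^ 2 / p ^ 2 + B ^ 2 / p' ^ 2) * p ^ 2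
      = (A ^ 2 * p' ^ 2 + B ^ 2 * p ^ 2) / (2 * b * p' ^ 2) := by
    field_simp
  rw [h1, le_div_iff₀ (by positivity)]
  nlinarith [sq_nonneg (A * p' - B * p),
    mul_le_mul_of_nonneg_left hs (by positivity : (0:ℝ) ≤ 2 * A * B * p'),
    mul_le_mul_of_nonneg_right hI (by positivity : (0:ℝ) ≤ 2 * b * p' ^ 2)]

theorem final_step (β1 b u v w x : ℝ) (hβ1 : 0 ≤ β1) (h1β : 0 < 1 - β1) (hb : 0 < b)
    (hx : (1 - β1) * x = u - β1 * w) (hw : w ≤ (1 / (2 * b)) * (u + v)) :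
    -x ≤ -((1 - β1 / b) / (1 - β1)) * u - (β1 / (2 * (1 - β1) * b)) * u
      + (β1 / (2 * (1 - β1) * b)) * v := by
  have h5 : β1 * w ≤ β1 * ((1 / (2 * b)) * (u + v)) := mul_le_mul_of_nonneg_left hw hβ1
  have hx' : x = (u - β1 * w) / (1 - β1) := by field_simp; linarith
  rw [hx', ← neg_div, div_le_iff₀ h1β]
  have hR : (-((1 - β1 / b) / (1 - β1)) * u - (β1 / (2 * (1 - β1) * b)) * u
      + (β1 / (2 * (1 - β1) * b)) * v) * (1 - β1)
      = -u + β1 * ((1 / (2 * b)) * (u + v)) := by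
    field_simp; ring
  rw [hR]; linarith

theorem first_order_lyapunov_bound {E : Type*} [NormedAddCommGroup E] [InnerProductSpace ℝ E]
    (β1 β2 : ℝ) (hβ1 : 0 ≤ β1) (hβ2 : 0 < β2) (hβ2' : β2 < 1)
    (hββ : β1 < β2 ^ ((1 : ℝ) / 4))
    (G m : ℕ → E) (ν : ℕ → ℝ) (hm0 : m 0 = 0) (hν0 : 0 < ν 0)
    (hm : ∀ t : ℕ, 1 ≤ t → m t = β1 • m (t - 1) + (1 - β1) • G t)
    (hν : ∀ t : ℕ, 1 ≤ t → ν t = β2 * ν (t - 1) + (1 - β2) * ‖G t‖ ^ 2)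
    (t : ℕ) (ht : 1 ≤ t) :
    -⟪G t, (Real.sqrt (ν t))⁻¹ • m t⟫ ≤
      -((1 - β1 / β2 ^ ((1 : ℝ) / 4)) / (1 - β1)) * (‖m t‖ ^ 2 / Real.sqrt (ν t)) -
        (β1 / (2 * (1 - β1) * β2 ^ ((1 : ℝ) / 4))) * (‖m t‖ ^ 2 / Real.sqrt (ν t)) +
        (β1 / (2 * (1 - β1) * β2 ^ ((1 : ℝ) / 4))) * (‖m (t - 1)‖ ^ 2 / Real.sqrt (ν (t - 1))) := by
  set b : ℝ := β2 ^ ((1 : ℝ) / 4) with hbdef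
  have hb : 0 < b := Real.rpow_pos_of_pos hβ2 _
  have hb1 : b < 1 := Real.rpow_lt_one hβ2.le hβ2' (by norm_num)
  have h1β : 0 < 1 - β1 := by linarith
  -- positivity of ν
  have hνpos : ∀ n, 0 < ν n := by
    intro n
    induction n with
    | zero => exact hν0
    | succ k ih =>
      have := hν (k + 1) (by omega)
      simp only [Nat.add_sub_cancel] at this
      rw [this]
      nlinarith [sq_nonneg ‖G (k+1)‖]
  -- fourth roots
  set p : ℝ := (ν t) ^ ((1 : ℝ) / 4) with hpdef
  set p' : ℝ := (ν (t - 1)) ^ ((1 : ℝ) / 4) with hp'def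
  have hp : 0 < p := Real.rpow_pos_of_pos (hνpos t) _
  have hp' : 0 < p' := Real.rpow_pos_of_pos (hνpos (t - 1)) _
  have hsq : ∀ n, Real.sqrt (ν n) = ((ν n) ^ ((1 : ℝ) / 4)) ^ 2 := by
    intro n
    rw [Real.sqrt_eq_rpow, ← Real.rpow_natCast ((ν n) ^ ((1:ℝ)/4)) 2,
      ← Real.rpow_mul (hνpos n).le]
    norm_num
  have hSt : Real.sqrt (ν t) = p ^ 2 := hsq t
  have hSt' : Real.sqrt (ν (t - 1)) = p' ^ 2 := hsq (t - 1)
  -- ν t ≥ β2 ν (t-1), hence b * p' ≤ p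
  have hνge : β2 * ν (t - 1) ≤ ν t := by
    rw [hν t ht]; nlinarith [sq_nonneg ‖G t‖]
  have hbp : b * p' ≤ p := by
    rw [hbdef, hp'def, hpdef, ← Real.mul_rpow hβ2.le (hνpos (t - 1)).le]
    exact Real.rpow_le_rpow (mul_nonneg hβ2.le (hνpos _).le) hνge (by norm_num)
  -- inner product identity
  have hGm : (1 - β1) • G t = m t - β1 • m (t - 1) := by
    rw [hm t ht]; abel
  have hX : (1 - β1) * ⟪G t, m t⟫ = ‖m t‖ ^ 2 - β1 * ⟪m (t - 1), m t⟫ := by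
    calc (1 - β1) * ⟪G t, m t⟫ = ⟪(1 - β1) • G t, m t⟫ := (real_inner_smul_left _ _ _).symm
      _ = ⟪m t - β1 • m (t - 1), m t⟫ := by rw [hGm]
      _ = ⟪m t, m t⟫ - β1 * ⟪m (t - 1), m t⟫ := by
          rw [inner_sub_left, real_inner_smul_left]
      _ = ‖m t‖ ^ 2 - β1 * ⟪m (t - 1), m t⟫ := by rw [real_inner_self_eq_norm_sq]
  -- rewrite goal
  rw [real_inner_smul_right, hSt, hSt']
  have hyoung := young_step b p p' ‖m t‖ ‖m (t - 1)‖ ⟪m (t - 1), m t⟫ hb hp hp'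
    (norm_nonneg _) (norm_nonneg _)
    (by rw [mul_comm]; exact real_inner_le_norm _ _) hbp
  have hxeq : (1 - β1) * ((p ^ 2)⁻¹ * ⟪G t, m t⟫)
      = ‖m t‖ ^ 2 / p ^ 2 - β1 * (⟪m (t - 1), m t⟫ / p ^ 2) := by
    field_simp
    linarith [hX]
  exact final_step β1 b (‖m t‖ ^ 2 / p ^ 2) (‖m (t - 1)‖ ^ 2 / p' ^ 2)
    (⟪m (t - 1), m t⟫ / p ^ 2) ((p ^ 2)⁻¹ * ⟪G t, m t⟫) hβ1 h1β hb hxeq hyoung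
end
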